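/- Fix an integer b ≥ 2, λ_c > 0, and ε ∈ (0, η_b), and let (X_N)_{N≥1} be a sequence of nonnegative reals such that |X_N − κ_b²/(λ_c N)| = O(1/N²). Then there exists a constant C > 0 such that for all sufficiently large N, C^{−1}/log N ≤ M^{⌊λ_c N + ε log N⌋}(X_N) ≤ C/log N. -/

import Mathlib

open Filter Real

noncomputable section

/-- The variance map `M(x) = ((1+x)^b - 1)/b`; its `k`-fold composition is `(Mmap b)^[k]`. -/
def Mmap (b : ℕ) (x : ℝ) : ℝ := ((1 + x) ^ b - 1) / b

/-- `κ_b = (2/(b-1))^{1/2}`. -/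
def kappa (b : ℕ) : ℝ := Real.sqrt (2 / ((b : ℝ) - 1))

/-- `η_b = (b+1)/(3(b-1))`. -/
def eta (b : ℕ) : ℝ := ((b : ℝ) + 1) / (3 * ((b : ℝ) - 1))

/-!
With `u = 1/x`, the map `M` reads `u ↦ u - A + G/u + O(1/u²)` near `u = ∞`, where
`A = (b-1)/2` and `G = (b²-1)/12 = η_b A²`. Hence the potential `ψ_c(x) = 1/x - c log x` drops by
at most `A` per step for small `x` when `c A < G`, and by at least `A` when `c A > G`. Starting
from `1/X_N = AλN + O(1)` and running `k = λN + ε log N + O(1)` steps turns `ψ_c(X_N)` into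
`(c - Aε) log N + O(1)`. Since `ε < η_b`, one can take `Aε < c₁ < G/A < c₂`: the potential `ψ_{c₁}`
stays large (which also keeps every iterate in the region where the one-step estimates hold) and
bounds `1/x_k` below by a multiple of `log N`, while `ψ_{c₂}` bounds it above.
-/

open Set Asymptotics Topology

lemma isBigO_mul_of_tendsto {α : Type*} {l : Filter α} {g h : α → ℝ} {c : ℝ}
    (hh : Tendsto h l (𝓝 c)) : (fun x => g x * h x) =O[l] g := by
  simpa using (isBigO_refl g l).mul (hh.isBigO_one ℝ)

lemma eventually_pos_of_sub_mul_isBigO_sq {f : ℝ → ℝ} {g : ℝ} (hg : 0 < g)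
    (hf : (fun x => f x - g * x) =O[𝓝[>] 0] fun x => x ^ 2) : ∀ᶠ x in 𝓝[>] 0, 0 < f x := by
  have hlo := hf.trans_isLittleO ((isLittleO_pow_id one_lt_two).mono nhdsWithin_le_nhds)
  filter_upwards [hlo.def (half_pos hg), self_mem_nhdsWithin] with x hx (hx0 : 0 < x)
  rw [norm_eq_abs, norm_eq_abs, abs_of_pos hx0] at hx
  nlinarith [neg_abs_le (f x - g * x)]

lemma abs_log_sub_sub_one_le {y : ℝ} (hy : 1 ≤ y) : |log y - (y - 1)| ≤ (y - 1) ^ 2 := by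
  have hy0 : 0 < y := by linarith
  have hinv : y⁻¹ ≤ 1 - (y - 1) + (y - 1) ^ 2 := by
    rw [inv_le_iff_one_le_mul₀ hy0]; nlinarith [pow_nonneg (sub_nonneg.2 hy) 3]
  rw [abs_le]
  constructor
  · linarith [one_sub_inv_le_log_of_pos hy0]
  · nlinarith [log_le_sub_one_of_pos hy0]

lemma natFloor_sub_isBigO_one {α : Type*} {l : Filter α} {y : α → ℝ} (hy : ∀ᶠ N in l, 0 ≤ y N) :
    (fun N => (⌊y N⌋₊ : ℝ) - y N) =O[l] fun _ => (1 : ℝ) := by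
  refine IsBigO.of_bound 1 ?_
  filter_upwards [hy] with N hN
  rw [norm_one, mul_one, norm_eq_abs, abs_sub_comm, abs_le]
  constructor <;> linarith [Nat.floor_le hN, Nat.lt_floor_add_one (y N)]

lemma inv_div_le_and_le_div {x L d D : ℝ} (hx : 0 < x) (hL : 0 < L) (hd : 0 < d)
    (hlo : d * L ≤ x⁻¹) (hhi : x⁻¹ ≤ D * L) :
    (max D d⁻¹)⁻¹ / L ≤ x ∧ x ≤ max D d⁻¹ / L := by
  constructor
  · calc (max D d⁻¹)⁻¹ / L = (max D d⁻¹ * L)⁻¹ := by rw [mul_inv, div_eq_mul_inv]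
      _ ≤ x⁻¹⁻¹ := inv_anti₀ (inv_pos.2 hx) (hhi.trans (by gcongr; exact le_max_left _ _))
      _ = x := inv_inv x
  · calc x = x⁻¹⁻¹ := (inv_inv x).symm
      _ ≤ (d * L)⁻¹ := inv_anti₀ (by positivity) hlo
      _ = d⁻¹ / L := by rw [mul_inv, div_eq_mul_inv]
      _ ≤ max D d⁻¹ / L := by gcongr; exact le_max_right _ _

lemma Nat.cast_choose_three (n : ℕ) :
    (n.choose 3 : ℝ) = n * ((n : ℝ) - 1) * ((n : ℝ) - 2) / 6 := by
  induction n with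
  | zero => simp
  | succ m ih =>
    rw [Nat.choose_succ_succ, Nat.cast_add, ih, Nat.cast_choose_two]
    push_cast
    ring

/- `M x = x + A x² + B x³ + O(x⁴)` and `(M x)⁻¹ = x⁻¹ - A + G x + O(x²)` with
`A = quadCoeff b`, `B = cubicCoeff b` and `G = driftCoeff b = A² - B`. -/
def quadCoeff (b : ℕ) : ℝ := ((b : ℝ) - 1) / 2
def cubicCoeff (b : ℕ) : ℝ := ((b : ℝ) - 1) * ((b : ℝ) - 2) / 6
def driftCoeff (b : ℕ) : ℝ := ((b : ℝ) ^ 2 - 1) / 12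

lemma quadCoeff_pos {b : ℕ} (hb : 2 ≤ b) : 0 < quadCoeff b := by
  have : (2 : ℝ) ≤ b := by exact_mod_cast hb
  rw [quadCoeff]; linarith

lemma driftCoeff_pos {b : ℕ} (hb : 2 ≤ b) : 0 < driftCoeff b := by
  have : (2 : ℝ) ≤ b := by exact_mod_cast hb
  rw [driftCoeff]; nlinarith

lemma driftCoeff_eq (b : ℕ) : driftCoeff b = quadCoeff b ^ 2 - cubicCoeff b := by
  rw [driftCoeff, quadCoeff, cubicCoeff]; ring

lemma kappa_sq {b : ℕ} (hb : 1 ≤ b) : kappa b ^ 2 = (quadCoeff b)⁻¹ := by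
  have : (1 : ℝ) ≤ b := by exact_mod_cast hb
  rw [kappa, sq_sqrt (div_nonneg zero_le_two (by linarith)), quadCoeff, inv_div]

lemma eta_mul_quadCoeff_sq {b : ℕ} (hb : b ≠ 1) : eta b * quadCoeff b ^ 2 = driftCoeff b := by
  have : (b : ℝ) - 1 ≠ 0 := sub_ne_zero.2 (by exact_mod_cast hb)
  rw [eta, quadCoeff, driftCoeff]
  field_simp
  ring

lemma exists_quadCoeff_mul_lt_and_mul_quadCoeff_lt {b : ℕ} (hb : 2 ≤ b) {ε : ℝ}
    (hε : ε < eta b) : ∃ c, quadCoeff b * ε < c ∧ c * quadCoeff b < driftCoeff b := by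
  have hA := quadCoeff_pos hb
  have : quadCoeff b * ε < driftCoeff b / quadCoeff b := by
    rw [lt_div_iff₀ hA, ← eta_mul_quadCoeff_sq (by omega)]
    linarith [mul_lt_mul_of_pos_right hε (pow_pos hA 2)]
  obtain ⟨c, h₁, h₂⟩ := exists_between this
  exact ⟨c, h₁, (lt_div_iff₀ hA).1 h₂⟩

open Polynomial in
lemma exists_continuous_Mmap_eq {b : ℕ} (hb : b ≠ 0) : ∃ q : ℝ → ℝ, Continuous q ∧ ∀ x,
    Mmap b x = x * (1 + quadCoeff b * x + cubicCoeff b * x ^ 2 + x ^ 3 * q x) := by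
  obtain ⟨Q, hQ⟩ : (X ^ 4 : ℝ[X]) ∣ (X + 1) ^ b - (1 + C (b : ℝ) * X + C (b.choose 2 : ℝ) * X ^ 2
      + C (b.choose 3 : ℝ) * X ^ 3) := by
    refine X_pow_dvd_iff.2 fun d hd => ?_
    interval_cases d <;> simp [coeff_X_add_one_pow, coeff_X, coeff_one]
  refine ⟨fun x => Q.eval x / b, by fun_prop, fun x => ?_⟩
  have hx := congr_arg (eval x) hQ
  simp only [eval_sub, eval_add, eval_pow, eval_X, eval_one, eval_mul, eval_C,
    Nat.cast_choose_two, Nat.cast_choose_three] at hx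
  have hb' : (b : ℝ) ≠ 0 := Nat.cast_ne_zero.2 hb
  have hQb : (b : ℝ) * (Q.eval x / b) = Q.eval x := mul_div_cancel₀ _ hb'
  rw [Mmap, quadCoeff, cubicCoeff, div_eq_iff hb']
  linear_combination hx - x ^ 4 * hQb

lemma self_le_Mmap {b : ℕ} (hb : b ≠ 0) {x : ℝ} (hx : -2 ≤ x) : x ≤ Mmap b x := by
  have hb' : (0 : ℝ) < b := by positivity
  rw [Mmap, le_div_iff₀ hb']
  linarith [one_add_mul_le_pow hx b]

lemma mapsTo_Mmap_Ioi {b : ℕ} (hb : b ≠ 0) : MapsTo (Mmap b) (Ioi 0) (Ioi 0) :=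
  fun x (hx : 0 < x) => hx.trans_le (self_le_Mmap hb (by linarith))

lemma inv_Mmap_sub_isBigO {b : ℕ} (hb : b ≠ 0) :
    (fun x => (Mmap b x)⁻¹ - (x⁻¹ - quadCoeff b + driftCoeff b * x)) =O[𝓝[>] 0]
      fun x => x ^ 2 := by
  obtain ⟨q, hq, hM⟩ := exists_continuous_Mmap_eq hb
  rw [driftCoeff_eq]
  set A := quadCoeff b
  set B := cubicCoeff b
  set p : ℝ → ℝ := fun x => 1 + A * x + B * x ^ 2 + x ^ 3 * q x
  have hp : Continuous p := by fun_prop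
  set s : ℝ → ℝ := fun x =>
    A * (A ^ 2 - 2 * B) + B * (A ^ 2 - B) * x + q x * (1 - A * x + (A ^ 2 - B) * x ^ 2)
  -- `(x * p x)⁻¹ - (x⁻¹ - A + (A² - B) x) = x² (-s x / p x)`
  have hr : Tendsto (fun x => -s x / p x) (𝓝[>] 0) (𝓝 (-s 0 / p 0)) :=
    (((by fun_prop : Continuous s).neg.continuousAt.div hp.continuousAt (by simp [p])).tendsto
      |>.mono_left nhdsWithin_le_nhds)
  refine (isBigO_mul_of_tendsto hr).congr' ?_ EventuallyEq.rfl
  filter_upwards [self_mem_nhdsWithin] with x (hx : 0 < x)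
  have hMp : Mmap b x = x * p x := hM x
  have hpx : p x ≠ 0 := by
    have := self_le_Mmap hb (by linarith : -2 ≤ x)
    rw [hMp] at this
    nlinarith
  rw [hMp]
  field_simp
  simp only [p, s]
  ring

lemma log_Mmap_sub_isBigO {b : ℕ} (hb : b ≠ 0) :
    (fun x => log (Mmap b x) - log x - quadCoeff b * x) =O[𝓝[>] 0] fun x => x ^ 2 := by
  obtain ⟨q, hq, hM⟩ := exists_continuous_Mmap_eq hb
  set w : ℝ → ℝ := fun x => quadCoeff b + cubicCoeff b * x + x ^ 2 * q x
  have hMw (x : ℝ) : Mmap b x = x * (1 + x * w x) := by rw [hM]; ring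
  have hw1 : ∀ᶠ x in 𝓝[>] 0, 0 < x ∧ 1 ≤ 1 + x * w x := by
    filter_upwards [self_mem_nhdsWithin] with x (hx : 0 < x)
    have := self_le_Mmap hb (by linarith : -2 ≤ x)
    rw [hMw] at this
    exact ⟨hx, by nlinarith⟩
  have hlog : (fun x => log (1 + x * w x) - x * w x) =O[𝓝[>] 0] fun x => x ^ 2 := by
    refine (IsBigO.of_bound' ?_).trans (isBigO_mul_of_tendsto
      ((by fun_prop : Continuous fun x => w x ^ 2).tendsto 0 |>.mono_left nhdsWithin_le_nhds))
    filter_upwards [hw1] with x ⟨hx, h1⟩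
    rw [norm_eq_abs, norm_eq_abs, abs_of_nonneg (by positivity : (0 : ℝ) ≤ x ^ 2 * w x ^ 2)]
    have := abs_log_sub_sub_one_le h1
    rw [add_sub_cancel_left] at this
    linarith [show (x * w x) ^ 2 = x ^ 2 * w x ^ 2 by ring]
  have hrest : (fun x => x ^ 2 * (cubicCoeff b + x * q x)) =O[𝓝[>] 0] fun x => x ^ 2 :=
    isBigO_mul_of_tendsto ((by fun_prop : Continuous fun x => cubicCoeff b + x * q x).tendsto 0
      |>.mono_left nhdsWithin_le_nhds)
  refine (hlog.add hrest).congr' ?_ EventuallyEq.rfl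
  filter_upwards [hw1] with x ⟨hx, h1⟩
  rw [hMw, log_mul hx.ne' (by linarith)]
  ring

def logPotential (c x : ℝ) : ℝ := x⁻¹ - c * log x

lemma logPotential_strictAntiOn {c : ℝ} (hc : 0 ≤ c) : StrictAntiOn (logPotential c) (Ioi 0) := by
  intro x (hx : 0 < x) y _ hxy
  have := mul_le_mul_of_nonneg_left (log_le_log hx hxy.le) hc
  simp only [logPotential]
  linarith [inv_strictAntiOn hx (hx.trans hxy) hxy]

lemma inv_le_logPotential {c x : ℝ} (hc : 0 ≤ c) (hx : 0 < x) (hx1 : x ≤ 1) :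
    x⁻¹ ≤ logPotential c x := by
  simp only [logPotential]
  nlinarith [log_nonpos hx.le hx1]

lemma logPotential_le {c x : ℝ} (hc : 0 ≤ c) (hx : 0 < x) :
    logPotential c x ≤ (1 + c) * x⁻¹ := by
  have : -log x ≤ x⁻¹ := by
    rw [← log_inv]; linarith [log_le_sub_one_of_pos (inv_pos.2 hx)]
  simp only [logPotential]
  nlinarith

lemma logPotential_Mmap_sub_isBigO {b : ℕ} (hb : b ≠ 0) (c : ℝ) :
    (fun x => logPotential c (Mmap b x) - logPotential c x + quadCoeff b
      - (driftCoeff b - c * quadCoeff b) * x) =O[𝓝[>] 0] fun x => x ^ 2 :=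
  ((inv_Mmap_sub_isBigO hb).sub ((log_Mmap_sub_isBigO hb).const_mul_left c)).congr_left
    fun x => by simp only [logPotential]; ring

lemma eventually_logPotential_sub_le_logPotential_Mmap {b : ℕ} (hb : b ≠ 0) {c : ℝ}
    (hc : c * quadCoeff b < driftCoeff b) :
    ∀ᶠ x in 𝓝[>] 0, logPotential c x - quadCoeff b ≤ logPotential c (Mmap b x) := by
  filter_upwards [eventually_pos_of_sub_mul_isBigO_sq (sub_pos.2 hc)
    (logPotential_Mmap_sub_isBigO hb c)] with x hx
  linarith

lemma eventually_logPotential_Mmap_le_sub {b : ℕ} (hb : b ≠ 0) {c : ℝ}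
    (hc : driftCoeff b < c * quadCoeff b) :
    ∀ᶠ x in 𝓝[>] 0, logPotential c (Mmap b x) ≤ logPotential c x - quadCoeff b := by
  filter_upwards [eventually_pos_of_sub_mul_isBigO_sq
    (f := fun x => logPotential c x - quadCoeff b - logPotential c (Mmap b x)) (sub_pos.2 hc)
    ((logPotential_Mmap_sub_isBigO hb c).neg_left.congr_left fun x => by ring)] with x hx
  linarith

lemma iterate_le_add_mul {α : Type*} {f : α → α} {φ : α → ℝ} {S : Set α} {a : ℝ}
    (hstep : ∀ y ∈ S, φ (f y) ≤ φ y + a) {x : α} {n : ℕ} (hS : ∀ m < n, f^[m] x ∈ S) :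
    φ (f^[n] x) ≤ φ x + a * n := by
  induction n with
  | zero => simp
  | succ n ih =>
    rw [Function.iterate_succ_apply', Nat.cast_succ]
    linarith [hstep _ (hS n n.lt_succ_self), ih fun m hm => hS m (hm.trans n.lt_succ_self)]

lemma iterate_mem_Ioc_of_le_sub {f φ : ℝ → ℝ} {a δ x : ℝ} {n : ℕ}
    (hφ : StrictAntiOn φ (Ioi 0)) (hf : MapsTo f (Ioi 0) (Ioi 0)) (ha : 0 ≤ a) (hδ : 0 < δ)
    (hstep : ∀ y ∈ Ioc 0 δ, φ y - a ≤ φ (f y)) (hx : 0 < x) (hn : φ δ ≤ φ x - a * n) :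
    ∀ m ≤ n, f^[m] x ∈ Ioc 0 δ ∧ φ x - a * m ≤ φ (f^[m] x) := by
  have hle {y : ℝ} (hy : 0 < y) (h : φ δ ≤ φ y) : y ∈ Ioc 0 δ :=
    ⟨hy, (hφ.le_iff_ge hδ hy).1 h⟩
  intro m hm
  induction m with
  | zero =>
    have : 0 ≤ a * (n : ℝ) := by positivity
    exact ⟨hle hx (by simp only [Function.iterate_zero_apply]; linarith), by simp⟩
  | succ m ih =>
    obtain ⟨hmem, hpot⟩ := ih (by omega)
    have hnm : a * ((m + 1 : ℕ) : ℝ) ≤ a * n := by gcongr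
    have hstep' := hstep _ hmem
    rw [← Function.iterate_succ_apply' f m x] at hstep'
    push_cast at hnm ⊢
    exact ⟨hle (Function.iterate_succ_apply' f m x ▸ hf hmem.1) (by linarith), by linarith⟩

lemma inv_iterate_bounds {f : ℝ → ℝ} {a α c₁ c₂ δ L B₁ B₂ x : ℝ} {n : ℕ}
    (hf : MapsTo f (Ioi 0) (Ioi 0)) (ha : 0 ≤ a) (hc₁ : 0 ≤ c₁) (hc₂ : 0 ≤ c₂)
    (hδ : 0 < δ) (hδ1 : δ ≤ 1)
    (hstep₁ : ∀ y ∈ Ioc 0 δ, logPotential c₁ y - a ≤ logPotential c₁ (f y))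
    (hstep₂ : ∀ y ∈ Ioc 0 δ, logPotential c₂ (f y) ≤ logPotential c₂ y - a) (hx : 0 < x)
    (h₁ : |logPotential c₁ x - a * n - (c₁ - α) * L| ≤ B₁)
    (h₂ : |logPotential c₂ x - a * n - (c₂ - α) * L| ≤ B₂)
    (hL : B₁ + |logPotential c₁ δ| ≤ (c₁ - α) * L / 2) :
    (c₁ - α) * L / 2 ≤ (1 + c₁) * (f^[n] x)⁻¹ ∧ (f^[n] x)⁻¹ ≤ (c₂ - α) * L + B₂ := by
  obtain ⟨h₁l, -⟩ := abs_le.1 h₁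
  obtain ⟨-, h₂u⟩ := abs_le.1 h₂
  have hδψ := le_abs_self (logPotential c₁ δ)
  have hδψ' := abs_nonneg (logPotential c₁ δ)
  have hB₁ := (abs_nonneg _).trans h₁
  have hmem := iterate_mem_Ioc_of_le_sub (logPotential_strictAntiOn hc₁) hf ha hδ hstep₁ hx
    (n := n) (by linarith)
  obtain ⟨⟨hpos, hleδ⟩, hlow⟩ := hmem n le_rfl
  have hup := iterate_le_add_mul (φ := logPotential c₂) (a := -a)
    (fun y hy => by linarith [hstep₂ y hy]) fun m hm => (hmem m hm.le).1
  constructor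
  · linarith [logPotential_le hc₁ hpos]
  · linarith [inv_le_logPotential hc₂ hpos (hleδ.trans hδ1)]

theorem exists_iterate_log_window {f : ℝ → ℝ} {x₀ : ℕ → ℝ} {k : ℕ → ℕ} {a α c₁ c₂ : ℝ}
    (hf : MapsTo f (Ioi 0) (Ioi 0)) (ha : 0 ≤ a) (hα : α < c₁) (hc₁ : 0 ≤ c₁) (hc₂ : 0 ≤ c₂)
    (hstep : ∀ᶠ y in 𝓝[>] 0, logPotential c₁ y - a ≤ logPotential c₁ (f y) ∧
      logPotential c₂ (f y) ≤ logPotential c₂ y - a)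
    (hx₀ : ∀ᶠ N in atTop, 0 < x₀ N)
    (hstart : ∀ c, (fun N : ℕ => logPotential c (x₀ N) - a * k N - (c - α) * log N)
      =O[atTop] fun _ => (1 : ℝ)) :
    ∃ C, 0 < C ∧ ∀ᶠ N : ℕ in atTop,
      C⁻¹ / log N ≤ f^[k N] (x₀ N) ∧ f^[k N] (x₀ N) ≤ C / log N := by
  obtain ⟨δ, hδ, hδsub⟩ :=
    mem_nhdsGT_iff_exists_Ioc_subset.1 (hstep.and (Ioc_mem_nhdsGT zero_lt_one))
  have hδ1 : δ ≤ 1 := (hδsub ⟨hδ, le_rfl⟩).2.2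
  obtain ⟨B₁, hB₁⟩ := (hstart c₁).bound
  obtain ⟨B₂, hB₂⟩ := (hstart c₂).bound
  have hd : 0 < (c₁ - α) / 2 / (1 + c₁) := by have := sub_pos.2 hα; positivity
  refine ⟨max (|c₂ - α| + |B₂|) ((c₁ - α) / 2 / (1 + c₁))⁻¹,
    lt_max_of_lt_right (inv_pos.2 hd), ?_⟩
  have hlog := tendsto_log_atTop.comp tendsto_natCast_atTop_atTop
  filter_upwards [hx₀, hB₁, hB₂, hlog.eventually_ge_atTop 1,
    hlog.eventually_ge_atTop (2 * (B₁ + |logPotential c₁ δ|) / (c₁ - α))]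
    with N hxN h₁ h₂ hL1 hL
  simp only [norm_one, mul_one, norm_eq_abs, Function.comp_apply] at h₁ h₂ hL1 hL
  rw [div_le_iff₀' (sub_pos.2 hα)] at hL
  obtain ⟨hlo, hhi⟩ := inv_iterate_bounds hf ha hc₁ hc₂ hδ hδ1 (fun y hy => (hδsub hy).1.1)
    (fun y hy => (hδsub hy).1.2) hxN h₁ h₂ (by linarith)
  refine inv_div_le_and_le_div (hf.iterate (k N) hxN) (by linarith) hd ?_ ?_
  · rw [div_mul_eq_mul_div, div_le_iff₀ (by linarith)]
    linarith
  · nlinarith [le_abs_self (c₂ - α), le_abs_self B₂, abs_nonneg B₂]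

lemma isBigO_sq_mul_sub_div {X : ℕ → ℝ} {a : ℝ}
    (hX : (fun N : ℕ => X N - a / N) =O[atTop] fun N => ((N : ℝ) ^ 2)⁻¹) :
    (fun N : ℕ => (N : ℝ) ^ 2 * (X N - a / N)) =O[atTop] fun _ => (1 : ℝ) := by
  refine ((isBigO_refl (fun N : ℕ => (N : ℝ) ^ 2) atTop).mul hX).congr' EventuallyEq.rfl ?_
  filter_upwards [eventually_ne_atTop 0] with N hN
  simp [hN]

lemma tendsto_mul_of_sub_div_isBigO {X : ℕ → ℝ} {a : ℝ}
    (hX : (fun N : ℕ => X N - a / N) =O[atTop] fun N => ((N : ℝ) ^ 2)⁻¹) :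
    Tendsto (fun N : ℕ => N * X N) atTop (𝓝 a) := by
  have hinv : Tendsto (fun N : ℕ => 1 * (N : ℝ)⁻¹) atTop (𝓝 0) := by
    simpa using tendsto_inv_atTop_nhds_zero_nat (𝕜 := ℝ)
  have h := ((isBigO_sq_mul_sub_div hX).mul (isBigO_refl _ _)).trans_tendsto hinv
  have h' : Tendsto (fun N : ℕ => a + (N : ℝ) ^ 2 * (X N - a / N) * (N : ℝ)⁻¹) atTop (𝓝 a) := by
    simpa using h.const_add a
  refine h'.congr' ?_
  filter_upwards [eventually_ne_atTop 0] with N hN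
  field_simp
  ring

lemma eventually_pos_of_sub_div_isBigO {X : ℕ → ℝ} {a : ℝ} (ha : 0 < a)
    (hX : (fun N : ℕ => X N - a / N) =O[atTop] fun N => ((N : ℝ) ^ 2)⁻¹) :
    ∀ᶠ N in atTop, 0 < X N := by
  filter_upwards [(tendsto_mul_of_sub_div_isBigO hX).eventually (lt_mem_nhds ha)] with N hN
  exact pos_of_mul_pos_right hN N.cast_nonneg

lemma inv_sub_div_isBigO_one {X : ℕ → ℝ} {a : ℝ} (ha : a ≠ 0)
    (hX : (fun N : ℕ => X N - a / N) =O[atTop] fun N => ((N : ℝ) ^ 2)⁻¹) :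
    (fun N : ℕ => (X N)⁻¹ - N / a) =O[atTop] fun _ => (1 : ℝ) := by
  have hlim := tendsto_mul_of_sub_div_isBigO hX
  have hinv : Tendsto (fun N : ℕ => (a * (N * X N))⁻¹) atTop (𝓝 (a * a)⁻¹) :=
    (tendsto_const_nhds.mul hlim).inv₀ (mul_ne_zero ha ha)
  refine ((isBigO_sq_mul_sub_div hX).neg_left.mul (hinv.isBigO_one ℝ)).congr' ?_ (by simp)
  filter_upwards [eventually_ne_atTop 0, hlim.eventually_ne ha] with N hN hNX
  have hXN : X N ≠ 0 := (mul_ne_zero_iff.1 hNX).2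
  field_simp
  ring

lemma log_add_log_isBigO_one {X : ℕ → ℝ} {a : ℝ} (ha : a ≠ 0)
    (hX : (fun N : ℕ => X N - a / N) =O[atTop] fun N => ((N : ℝ) ^ 2)⁻¹) :
    (fun N : ℕ => log (X N) + log N) =O[atTop] fun _ => (1 : ℝ) := by
  have hlim := tendsto_mul_of_sub_div_isBigO hX
  refine (((continuousAt_log ha).tendsto.comp hlim).isBigO_one ℝ).congr' ?_ EventuallyEq.rfl
  filter_upwards [eventually_ne_atTop 0, hlim.eventually_ne ha] with N hN hNX
  have hXN : X N ≠ 0 := (mul_ne_zero_iff.1 hNX).2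
  simp [log_mul (Nat.cast_ne_zero.2 hN) hXN, add_comm]

lemma logPotential_initial_sub_isBigO {X : ℕ → ℝ} {k : ℕ → ℕ} {a A lam ε : ℝ} (ha : a ≠ 0)
    (hA : A * lam = a⁻¹) (hX : (fun N : ℕ => X N - a / N) =O[atTop] fun N => ((N : ℝ) ^ 2)⁻¹)
    (hk : (fun N : ℕ => (k N : ℝ) - (lam * N + ε * log N)) =O[atTop] fun _ => (1 : ℝ)) (c : ℝ) :
    (fun N : ℕ => logPotential c (X N) - A * k N - (c - A * ε) * log N)
      =O[atTop] fun _ => (1 : ℝ) := by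
  refine (((inv_sub_div_isBigO_one ha hX).sub
    ((log_add_log_isBigO_one ha hX).const_mul_left c)).sub (hk.const_mul_left A)).congr_left
    fun N => ?_
  rw [logPotential, div_eq_mul_inv, ← hA]
  ring

theorem Mmap_iterate_log_window_general
    (b : ℕ) (hb : 2 ≤ b) (lamc : ℝ) (hlamc : 0 < lamc)
    (ε : ℝ) (hε0 : 0 < ε) (hε1 : ε < eta b)
    (X : ℕ → ℝ)
    (hX : ∃ C : ℝ, 0 < C ∧ ∃ N₀ : ℕ, ∀ N ≥ N₀,
      |X N - kappa b ^ 2 / (lamc * N)| ≤ C / (N : ℝ) ^ 2) :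
    ∃ C : ℝ, 0 < C ∧ ∃ N₀ : ℕ, ∀ N ≥ N₀,
      C⁻¹ / Real.log N ≤ (Mmap b)^[⌊lamc * N + ε * Real.log N⌋₊] (X N) ∧
        (Mmap b)^[⌊lamc * N + ε * Real.log N⌋₊] (X N) ≤ C / Real.log N := by
  have hb0 : b ≠ 0 := by omega
  have hA := quadCoeff_pos hb
  have hG := driftCoeff_pos hb
  have ha : 0 < kappa b ^ 2 / lamc := by rw [kappa_sq (by omega)]; positivity
  obtain ⟨B, -, N₀, hN₀⟩ := hX
  have hXo : (fun N : ℕ => X N - kappa b ^ 2 / lamc / N) =O[atTop] fun N => ((N : ℝ) ^ 2)⁻¹ :=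
    IsBigO.of_bound B (eventually_atTop.2 ⟨N₀, fun N hN => by
      rw [div_div, norm_eq_abs, norm_inv, norm_pow, Real.norm_natCast, ← div_eq_mul_inv]
      exact hN₀ N hN⟩)
  obtain ⟨c, hεc, hcG⟩ := exists_quadCoeff_mul_lt_and_mul_quadCoeff_lt hb hε1
  have hk : ∀ᶠ N : ℕ in atTop, 0 ≤ lamc * N + ε * log N := by
    filter_upwards [eventually_ge_atTop 1] with N hN
    have : 0 ≤ log N := log_nonneg (by exact_mod_cast hN)
    positivity
  have hstep := (eventually_logPotential_sub_le_logPotential_Mmap hb0 hcG).and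
    (eventually_logPotential_Mmap_le_sub hb0 (c := driftCoeff b / quadCoeff b + 1)
      (by rw [add_mul, div_mul_cancel₀ _ hA.ne']; linarith))
  have hstart := logPotential_initial_sub_isBigO (A := quadCoeff b) ha.ne'
    (by rw [inv_div, kappa_sq (by omega), div_inv_eq_mul, mul_comm]) hXo
    (natFloor_sub_isBigO_one hk)
  obtain ⟨C, hC, hev⟩ := exists_iterate_log_window (mapsTo_Mmap_Ioi hb0) hA.le hεc
    ((mul_pos hA hε0).le.trans hεc.le) (by positivity) hstep
    (eventually_pos_of_sub_div_isBigO ha hXo) hstart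
  exact ⟨C, hC, eventually_atTop.1 hev⟩

/-- **Lemma (iterates of `M`), part (iii).** If `X_N = κ_b²/(λ_c N) + O(1/N²)` and
`0 < ε < η_b`, then `C⁻¹/log N ≤ M^{⌊λ_c N + ε log N⌋}(X_N) ≤ C/log N` for
all sufficiently large `N`. -/
theorem Mmap_iterate_log_window
    (b : ℕ) (hb : 2 ≤ b) (lamc : ℝ) (hlamc : 0 < lamc)
    (ε : ℝ) (hε0 : 0 < ε) (hε1 : ε < eta b)
    (X : ℕ → ℝ) (hXpos : ∀ N, 0 ≤ X N)
    (hX : ∃ C : ℝ, 0 < C ∧ ∃ N₀ : ℕ, ∀ N ≥ N₀,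
      |X N - kappa b ^ 2 / (lamc * N)| ≤ C / (N : ℝ) ^ 2) :
    ∃ C : ℝ, 0 < C ∧ ∃ N₀ : ℕ, ∀ N ≥ N₀,
      C⁻¹ / Real.log N ≤ (Mmap b)^[⌊lamc * N + ε * Real.log N⌋₊] (X N) ∧
        (Mmap b)^[⌊lamc * N + ε * Real.log N⌋₊] (X N) ≤ C / Real.log N :=
  Mmap_iterate_log_window_general b hb lamc hlamc ε hε0 hε1 X hX
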